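/- Let G be a group, H a subgroup of G, x ∈ G, P ∈ InvLO_x^H(G) ∩ Cof_x^H(G), and let ρ̄ = ρ̄_{x,P}^H : H → ℝ be the stable map. If h₁, …, h_k ∈ H satisfy ρ̄(h₁h₂⋯h_k) = 0, then |ρ̄(h₁) + ρ̄(h₂) + ⋯ + ρ̄(h_k)| ≤ k − 1. -/

import Mathlib

/-!
Since `1 <_P x`, and right multiplication by `x`, hence by every power of `x`, preserves `<_P`
on `⟨H, x⟩`, the floor function `ρ` satisfies `ρ c + ρ d ≤ ρ (c d) ≤ ρ c + ρ d + 1` on `H`.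
Its homogenization `ρ̄` is then conjugation invariant and `ρ ≤ ρ̄ ≤ ρ + 1`. Writing
`(c d)^n = (∏_{i<n} d^i c d^{-i}) d^n` shows that `ρ ((c d)^n)` stays within `n + O(1)` of
`n ρ̄ c + ρ (d^n)`, so `|ρ̄ (c d) - ρ̄ c - ρ̄ d| ≤ 1`, and `k` factors cost at most `k - 1`.
-/

open Filter Topology

/-- A subset `P ⊆ G` is the positive cone of a left ordering: `P·P ⊆ P` and
`G = P ⊔ P⁻¹ ⊔ {1}`. -/
def IsPosCone {G : Type*} [Group G] (P : Set G) : Prop :=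
  (∀ a ∈ P, ∀ b ∈ P, a * b ∈ P) ∧
  (∀ g : G, g ∈ P ∨ g⁻¹ ∈ P ∨ g = 1) ∧
  (∀ g : G, g ∈ P → g⁻¹ ∉ P) ∧
  (1 : G) ∉ P

/-- The left-invariant order determined by a positive cone: `a <_P b` iff `a⁻¹ b ∈ P`. -/
def ltC {G : Type*} [Group G] (P : Set G) (a b : G) : Prop := a⁻¹ * b ∈ P

/-- The non-strict order determined by a positive cone. -/
def leC {G : Type*} [Group G] (P : Set G) (a b : G) : Prop := ltC P a b ∨ a = b

/-- `P ∈ InvLO_x^H(G)`: right multiplication by `x` preserves `<_P` on the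
subgroup generated by `H ∪ {x}`. -/
def InvOn {G : Type*} [Group G] (P : Set G) (H : Subgroup G) (x : G) : Prop :=
  ∀ b ∈ Subgroup.closure ((H : Set G) ∪ {x}),
  ∀ b' ∈ Subgroup.closure ((H : Set G) ∪ {x}),
  ltC P b b' → ltC P (b * x) (b' * x)

/-- `P ∈ Cof_x^H(G)`: `x` is cofinal to `H` with respect to `<_P`. -/
def CofTo {G : Type*} [Group G] (P : Set G) (H : Subgroup G) (x : G) : Prop :=
  ∀ h ∈ H, ∃ N : ℕ, 1 ≤ N ∧ ltC P (x ^ (-(N : ℤ))) h ∧ ltC P h (x ^ (N : ℤ))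

/-- `ρ` is the quasi morphism `ρ_{x,P}^H`: if `1 <_P x` then
`x^(ρ h) ≤_P h <_P x^(ρ h + 1)`, and if `x <_P 1` then `x^(-ρ h - 1) <_P h ≤_P x^(-ρ h)`,
for all `h ∈ H`. -/
def RhoChar {G : Type*} [Group G] (P : Set G) (H : Subgroup G) (x : G) (ρ : G → ℤ) : Prop :=
  ∀ h ∈ H,
    (ltC P 1 x → leC P (x ^ ρ h) h ∧ ltC P h (x ^ (ρ h + 1))) ∧
    (ltC P x 1 → ltC P (x ^ (-(ρ h) - 1)) h ∧ leC P h (x ^ (-(ρ h))))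

theorem ltC_mul_left {G : Type*} [Group G] {P : Set G} (c : G) {a b : G} (h : ltC P a b) :
    ltC P (c * a) (c * b) := by
  rwa [ltC, show (c * a)⁻¹ * (c * b) = a⁻¹ * b by group]

theorem leC_mul_left {G : Type*} [Group G] {P : Set G} (c : G) {a b : G} (h : leC P a b) :
    leC P (c * a) (c * b) :=
  h.imp (ltC_mul_left c) (congrArg (c * ·))

namespace IsPosCone

variable {G : Type*} [Group G] {P : Set G} {K : Subgroup G} {x : G}

theorem ltC_trans (hP : IsPosCone P) {a b c : G} (hab : ltC P a b) (hbc : ltC P b c) :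
    ltC P a c := by
  have := hP.1 _ hab _ hbc
  rwa [show a⁻¹ * b * (b⁻¹ * c) = a⁻¹ * c by group] at this

theorem ltC_irrefl (hP : IsPosCone P) (a : G) : ¬ ltC P a a := by
  simpa [ltC] using hP.2.2.2

theorem ltC_of_leC_of_ltC (hP : IsPosCone P) {a b c : G} (hab : leC P a b)
    (hbc : ltC P b c) : ltC P a c := by
  rcases hab with hab | rfl
  exacts [hP.ltC_trans hab hbc, hbc]

theorem ltC_of_ltC_of_leC (hP : IsPosCone P) {a b c : G} (hab : ltC P a b)
    (hbc : leC P b c) : ltC P a c := by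
  rcases hbc with hbc | rfl
  exacts [hP.ltC_trans hab hbc, hab]

theorem leC_trans (hP : IsPosCone P) {a b c : G} (hab : leC P a b) (hbc : leC P b c) :
    leC P a c := by
  rcases hab with hab | rfl
  exacts [Or.inl (hP.ltC_of_ltC_of_leC hab hbc), hbc]

theorem zpow_mem (hP : IsPosCone P) (hx : x ∈ P) {n : ℤ} (hn : 0 < n) : x ^ n ∈ P := by
  obtain ⟨m, rfl⟩ : ∃ m : ℕ, n = m + 1 := ⟨(n - 1).toNat, by omega⟩
  clear hn
  induction m with
  | zero => simpa using hx
  | succ m ih => rw [Nat.cast_succ, zpow_add_one]; exact hP.1 _ ih _ hx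

theorem zpow_ltC_zpow (hP : IsPosCone P) (hx : x ∈ P) {m n : ℤ} (h : m < n) :
    ltC P (x ^ m) (x ^ n) := by
  rw [ltC, ← zpow_neg, ← zpow_add]
  exact hP.zpow_mem hx (by omega)

theorem zpow_leC_zpow (hP : IsPosCone P) (hx : x ∈ P) {m n : ℤ} (h : m ≤ n) :
    leC P (x ^ m) (x ^ n) := by
  rcases h.lt_or_eq with h | rfl
  exacts [Or.inl (hP.zpow_ltC_zpow hx h), Or.inr rfl]

theorem lt_of_zpow_ltC_zpow (hP : IsPosCone P) (hx : x ∈ P) {m n : ℤ}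
    (h : ltC P (x ^ m) (x ^ n)) : m < n := by
  by_contra! hnm
  exact hP.ltC_irrefl _ (hP.ltC_of_ltC_of_leC h (hP.zpow_leC_zpow hx hnm))

theorem le_of_zpow_leC_zpow (hP : IsPosCone P) (hx : x ∈ P) {m n : ℤ}
    (h : leC P (x ^ m) (x ^ n)) : m ≤ n := by
  by_contra! hnm
  exact hP.ltC_irrefl _ (hP.ltC_of_ltC_of_leC (hP.zpow_ltC_zpow hx hnm) h)

theorem ltC_of_mul_right_ltC (hP : IsPosCone P)
    (hK : ∀ b ∈ K, ∀ b' ∈ K, ltC P b b' → ltC P (b * x) (b' * x)) {b b' : G} (hb : b ∈ K)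
    (hb' : b' ∈ K) (h : ltC P (b * x) (b' * x)) : ltC P b b' := by
  rcases hP.2.1 (b⁻¹ * b') with hlt | hgt | heq
  · exact hlt
  · rw [show (b⁻¹ * b')⁻¹ = b'⁻¹ * b by group] at hgt
    exact absurd (hP.ltC_trans h (hK b' hb' b hb hgt)) (hP.ltC_irrefl _)
  · rw [inv_mul_eq_one.1 heq] at h
    exact absurd h (hP.ltC_irrefl _)

theorem ltC_mul_zpow_right (hP : IsPosCone P)
    (hK : ∀ b ∈ K, ∀ b' ∈ K, ltC P b b' → ltC P (b * x) (b' * x)) (hxK : x ∈ K) {b b' : G}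
    (hb : b ∈ K) (hb' : b' ∈ K) (h : ltC P b b') (n : ℤ) :
    ltC P (b * x ^ n) (b' * x ^ n) := by
  have hmem : ∀ {c : G} (m : ℤ), c ∈ K → c * x ^ m ∈ K :=
    fun m hc => K.mul_mem hc (K.zpow_mem hxK m)
  induction n using Int.induction_on with
  | zero => simpa using h
  | succ n ih =>
    simp only [zpow_add_one, ← mul_assoc]
    exact hK _ (hmem n hb) _ (hmem n hb') ih
  | pred n ih =>
    refine hP.ltC_of_mul_right_ltC hK (hmem _ hb) (hmem _ hb') ?_
    simpa only [zpow_sub_one, mul_assoc, inv_mul_cancel, mul_one] using ih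

theorem leC_mul_zpow_right (hP : IsPosCone P)
    (hK : ∀ b ∈ K, ∀ b' ∈ K, ltC P b b' → ltC P (b * x) (b' * x)) (hxK : x ∈ K) {b b' : G}
    (hb : b ∈ K) (hb' : b' ∈ K) (h : leC P b b') (n : ℤ) : leC P (b * x ^ n) (b' * x ^ n) :=
  h.imp (fun h => hP.ltC_mul_zpow_right hK hxK hb hb' h n) (congrArg (· * x ^ n))

end IsPosCone

section Homogenization

variable {G : Type*} [Group G]

def IsQuasimorphismOn (H : Subgroup G) (f : G → ℤ) : Prop :=
  ∀ c ∈ H, ∀ d ∈ H, f c + f d ≤ f (c * d) ∧ f (c * d) ≤ f c + f d + 1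

def IsHomogenizationOn (H : Subgroup G) (f : G → ℤ) (fb : G → ℝ) : Prop :=
  ∀ c ∈ H, Tendsto (fun n : ℕ => (f (c ^ n) : ℝ) / n) atTop (𝓝 (fb c))

theorem abs_sub_le_of_tendsto_div {u v : ℕ → ℝ} {L M b C : ℝ}
    (hu : Tendsto (fun n : ℕ => u n / n) atTop (𝓝 L))
    (hv : Tendsto (fun n : ℕ => v n / n) atTop (𝓝 M))
    (huv : ∀ n, |u n - v n| ≤ b * n + C) : |L - M| ≤ b := by
  have hbound : Tendsto (fun n : ℕ => b + C / n) atTop (𝓝 b) := by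
    simpa using tendsto_const_nhds.add (tendsto_const_div_atTop_nhds_zero_nat C)
  refine le_of_tendsto_of_tendsto (hu.sub hv).abs hbound ?_
  filter_upwards [eventually_gt_atTop 0] with n hn
  have hn' : (0 : ℝ) < n := by exact_mod_cast hn
  rw [← sub_div, abs_div, Nat.abs_cast, div_le_iff₀ hn', add_mul, div_mul_cancel₀ _ hn'.ne']
  linarith [huv n]

namespace IsQuasimorphismOn

variable {H : Subgroup G} {f : G → ℤ} {fb : G → ℝ}

theorem mul_le_apply_pow (hf : IsQuasimorphismOn H f) {c : G} (hc : c ∈ H) {n : ℕ}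
    (hn : 1 ≤ n) : n * f c ≤ f (c ^ n) := by
  induction n, hn using Nat.le_induction with
  | base => simp
  | succ n _ ih =>
    have := (hf _ (H.pow_mem hc n) c hc).1
    rw [← pow_succ] at this
    push_cast
    linarith

theorem apply_pow_le (hf : IsQuasimorphismOn H f) {c : G} (hc : c ∈ H) {n : ℕ}
    (hn : 1 ≤ n) : f (c ^ n) ≤ n * f c + n - 1 := by
  induction n, hn using Nat.le_induction with
  | base => simp
  | succ n _ ih =>
    have := (hf _ (H.pow_mem hc n) c hc).2
    rw [← pow_succ] at this
    push_cast
    linarith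

theorem le_homogenization (hf : IsQuasimorphismOn H f) (hfb : IsHomogenizationOn H f fb)
    {c : G} (hc : c ∈ H) : (f c : ℝ) ≤ fb c := by
  refine ge_of_tendsto (hfb c hc) ?_
  filter_upwards [eventually_ge_atTop 1] with n hn
  rw [le_div_iff₀ (by exact_mod_cast hn)]
  exact_mod_cast (mul_comm (f c) n).trans_le (hf.mul_le_apply_pow hc hn)

theorem homogenization_le (hf : IsQuasimorphismOn H f) (hfb : IsHomogenizationOn H f fb)
    {c : G} (hc : c ∈ H) : fb c ≤ f c + 1 := by
  refine le_of_tendsto (hfb c hc) ?_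
  filter_upwards [eventually_ge_atTop 1] with n hn
  rw [div_le_iff₀ (by exact_mod_cast hn)]
  have : (f (c ^ n) : ℝ) ≤ n * f c + n - 1 := by exact_mod_cast hf.apply_pow_le hc hn
  linarith

theorem homogenization_conj (hf : IsQuasimorphismOn H f) (hfb : IsHomogenizationOn H f fb)
    {c d : G} (hc : c ∈ H) (hd : d ∈ H) : fb (d * c * d⁻¹) = fb c := by
  have hbound : ∀ n : ℕ,
      |(f (d * c ^ n * d⁻¹) : ℝ) - f (c ^ n)| ≤ 0 * n + (|f d + f d⁻¹| + 2 : ℤ) := by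
    intro n
    have h₁ := hf d hd _ (H.pow_mem hc n)
    have h₂ := hf _ (H.mul_mem hd (H.pow_mem hc n)) _ (H.inv_mem hd)
    have := le_abs_self (f d + f d⁻¹)
    have := neg_abs_le (f d + f d⁻¹)
    rw [zero_mul, zero_add]
    exact_mod_cast abs_le.2 ⟨by linarith, by linarith⟩
  have hconj := hfb _ (H.mul_mem (H.mul_mem hd hc) (H.inv_mem hd))
  simp only [conj_pow] at hconj
  exact sub_eq_zero.1 (abs_nonpos_iff.1 (abs_sub_le_of_tendsto_div hconj (hfb c hc) hbound))

theorem abs_apply_one_le (hf : IsQuasimorphismOn H f) : |f 1| ≤ 1 := by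
  have := hf 1 H.one_mem 1 H.one_mem
  rw [mul_one] at this
  exact abs_le.2 ⟨by linarith, by linarith⟩

theorem abs_apply_mul_pow_mul_inv_pow_sub_le (hf : IsQuasimorphismOn H f)
    (hfb : IsHomogenizationOn H f fb) {c d : G} (hc : c ∈ H) (hd : d ∈ H) (n : ℕ) :
    |(f ((c * d) ^ n * (d ^ n)⁻¹) : ℝ) - n * fb c| ≤ n + 1 := by
  induction n with
  | zero => simpa using (show ((|f 1| : ℤ) : ℝ) ≤ 1 by exact_mod_cast hf.abs_apply_one_le)
  | succ n ih =>
    have hV : (c * d) ^ n * (d ^ n)⁻¹ ∈ H :=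
      H.mul_mem (H.pow_mem (H.mul_mem hc hd) n) (H.inv_mem (H.pow_mem hd n))
    have hw : d ^ n * c * (d ^ n)⁻¹ ∈ H :=
      H.mul_mem (H.mul_mem (H.pow_mem hd n) hc) (H.inv_mem (H.pow_mem hd n))
    -- `(c d)^n d^{-n}` is the product of the conjugates `d^i c d^{-i}`, `i < n`
    have hsplit : (c * d) ^ (n + 1) * (d ^ (n + 1))⁻¹
        = (c * d) ^ n * (d ^ n)⁻¹ * (d ^ n * c * (d ^ n)⁻¹) := by
      rw [pow_succ, pow_succ]; group
    have hstep := hf _ hV _ hw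
    rw [← hsplit] at hstep
    have hw₁ := hf.le_homogenization hfb hw
    have hw₂ := hf.homogenization_le hfb hw
    rw [hf.homogenization_conj hfb hc (H.pow_mem hd n)] at hw₁ hw₂
    have h₁ : (f ((c * d) ^ n * (d ^ n)⁻¹) : ℝ) + f (d ^ n * c * (d ^ n)⁻¹)
        ≤ f ((c * d) ^ (n + 1) * (d ^ (n + 1))⁻¹) := by exact_mod_cast hstep.1
    have h₂ : (f ((c * d) ^ (n + 1) * (d ^ (n + 1))⁻¹) : ℝ)
        ≤ f ((c * d) ^ n * (d ^ n)⁻¹) + f (d ^ n * c * (d ^ n)⁻¹) + 1 := by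
      exact_mod_cast hstep.2
    rw [abs_le] at ih ⊢
    push_cast
    constructor <;> linarith [ih.1, ih.2]

theorem abs_homogenization_mul_sub_le (hf : IsQuasimorphismOn H f)
    (hfb : IsHomogenizationOn H f fb) {c d : G} (hc : c ∈ H) (hd : d ∈ H) :
    |fb (c * d) - fb c - fb d| ≤ 1 := by
  have hu : Tendsto (fun n : ℕ => ((f ((c * d) ^ n) : ℝ) - f (d ^ n)) / n) atTop
      (𝓝 (fb (c * d) - fb d)) := by
    simpa only [sub_div] using (hfb _ (H.mul_mem hc hd)).sub (hfb d hd)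
  have hv : Tendsto (fun n : ℕ => fb c * n / n) atTop (𝓝 (fb c)) :=
    tendsto_const_nhds.congr' <| (eventually_ne_atTop 0).mono fun n hn => by
      simp [mul_div_cancel_right₀ _ (Nat.cast_ne_zero.2 hn : (n : ℝ) ≠ 0)]
  have hbound : ∀ n : ℕ, |(f ((c * d) ^ n) : ℝ) - f (d ^ n) - fb c * n| ≤ 1 * n + 2 := by
    intro n
    have hV := hf.abs_apply_mul_pow_mul_inv_pow_sub_le hfb hc hd n
    have hstep := hf _ (H.mul_mem (H.pow_mem (H.mul_mem hc hd) n) (H.inv_mem (H.pow_mem hd n)))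
      _ (H.pow_mem hd n)
    rw [inv_mul_cancel_right] at hstep
    have h₁ : (f ((c * d) ^ n * (d ^ n)⁻¹) : ℝ) + f (d ^ n) ≤ f ((c * d) ^ n) := by
      exact_mod_cast hstep.1
    have h₂ : (f ((c * d) ^ n) : ℝ) ≤ f ((c * d) ^ n * (d ^ n)⁻¹) + f (d ^ n) + 1 := by
      exact_mod_cast hstep.2
    rw [abs_le] at hV ⊢
    constructor <;> linarith [hV.1, hV.2]
  have := abs_sub_le_of_tendsto_div hu hv hbound
  rwa [sub_right_comm] at this

end IsQuasimorphismOn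

end Homogenization

theorem abs_apply_list_prod_sub_sum_le {M : Type*} [Monoid M] (S : Submonoid M) (φ : M → ℝ)
    (hφ : ∀ c ∈ S, ∀ d ∈ S, |φ (c * d) - φ c - φ d| ≤ 1) {l : List M} (hl : ∀ g ∈ l, g ∈ S)
    (hne : l ≠ []) : |φ l.prod - (l.map φ).sum| ≤ l.length - 1 := by
  obtain ⟨a, t, rfl⟩ := List.exists_cons_of_ne_nil hne
  clear hne
  rw [List.length_cons, Nat.cast_succ, add_sub_cancel_right]
  induction t generalizing a with
  | nil => simp
  | cons b t ih =>
    have hmem : ∀ g ∈ b :: t, g ∈ S := fun g hg => hl g (List.mem_cons_of_mem a hg)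
    have h₁ := hφ a (hl a List.mem_cons_self) _ (S.list_prod_mem hmem)
    have h₂ := ih b hmem
    rw [List.prod_cons, List.map_cons, List.sum_cons, List.length_cons, Nat.cast_succ]
    calc |φ (a * (b :: t).prod) - (φ a + ((b :: t).map φ).sum)|
        = |(φ (a * (b :: t).prod) - φ a - φ (b :: t).prod)
            + (φ (b :: t).prod - ((b :: t).map φ).sum)| := by congr 1; ring
      _ ≤ 1 + t.length := (abs_add_le _ _).trans (add_le_add h₁ h₂)
      _ = t.length + 1 := add_comm _ _

namespace RhoChar

variable {G : Type*} [Group G] {P : Set G} {H : Subgroup G} {x : G} {ρ : G → ℤ}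

/-- If `x <_P 1`, the bounds `x ^ (-ρ 1 - 1) <_P 1 ≤_P x ^ (-ρ 1)` demanded by `RhoChar` are
incompatible; `x = 1` is excluded by cofinality. -/
theorem mem_posCone (hP : IsPosCone P) (hcof : CofTo P H x) (hρ : RhoChar P H x ρ) : x ∈ P := by
  rcases hP.2.1 x with hx | hx | rfl
  · exact hx
  · obtain ⟨h₁, h₂⟩ := (hρ 1 H.one_mem).2 (by simpa [ltC] using hx)
    generalize ρ 1 = m at h₁ h₂
    have hzpow : ∀ a : ℤ, x ^ a = x⁻¹ ^ (-a) := fun a => by rw [inv_zpow', neg_neg]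
    rw [hzpow, ← zpow_zero x⁻¹] at h₁ h₂
    have := hP.lt_of_zpow_ltC_zpow hx h₁
    have := hP.le_of_zpow_leC_zpow hx h₂
    omega
  · obtain ⟨N, -, -, h⟩ := hcof 1 H.one_mem
    exact absurd (by simpa using h) (hP.ltC_irrefl 1)

theorem floor_bounds (hx : x ∈ P) (hρ : RhoChar P H x ρ) {h : G} (hh : h ∈ H) :
    leC P (x ^ ρ h) h ∧ ltC P h (x ^ (ρ h + 1)) :=
  (hρ h hh).1 (by simpa [ltC] using hx)

theorem le_apply (hP : IsPosCone P) (hx : x ∈ P) (hρ : RhoChar P H x ρ) {h : G} (hh : h ∈ H)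
    {m : ℤ} (hm : leC P (x ^ m) h) : m ≤ ρ h := by
  have := hP.lt_of_zpow_ltC_zpow hx (hP.ltC_of_leC_of_ltC hm (hρ.floor_bounds hx hh).2)
  omega

theorem apply_lt (hP : IsPosCone P) (hx : x ∈ P) (hρ : RhoChar P H x ρ) {h : G} (hh : h ∈ H)
    {m : ℤ} (hm : ltC P h (x ^ m)) : ρ h < m :=
  hP.lt_of_zpow_ltC_zpow hx (hP.ltC_of_leC_of_ltC (hρ.floor_bounds hx hh).1 hm)

theorem isQuasimorphismOn (hP : IsPosCone P) (hinv : InvOn P H x) (hx : x ∈ P)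
    (hρ : RhoChar P H x ρ) : IsQuasimorphismOn H ρ := by
  intro c hc d hd
  set K := Subgroup.closure ((H : Set G) ∪ {x})
  have hcK : c ∈ K := Subgroup.subset_closure (Or.inl hc)
  have hxK : x ∈ K := Subgroup.subset_closure (Or.inr rfl)
  obtain ⟨hc₁, hc₂⟩ := hρ.floor_bounds hx hc
  obtain ⟨hd₁, hd₂⟩ := hρ.floor_bounds hx hd
  constructor
  · refine hρ.le_apply hP hx (H.mul_mem hc hd) ?_
    rw [zpow_add]
    exact hP.leC_trans (hP.leC_mul_zpow_right hinv hxK (K.zpow_mem hxK _) hcK hc₁ _)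
      (leC_mul_left c hd₁)
  · have : ltC P (c * d) (x ^ (ρ c + ρ d + 2)) := by
      rw [show ρ c + ρ d + 2 = (ρ c + 1) + (ρ d + 1) by ring, zpow_add]
      exact hP.ltC_trans (ltC_mul_left c hd₂)
        (hP.ltC_mul_zpow_right hinv hxK hcK (K.zpow_mem hxK _) hc₂ _)
    have := hρ.apply_lt hP hx (H.mul_mem hc hd) this
    omega

end RhoChar

/-- if `ρ̄(h₁ h₂ ⋯ h_k) = 0` for `h₁, …, h_k ∈ H`, then
`|ρ̄(h₁) + ⋯ + ρ̄(h_k)| ≤ k - 1`. -/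
theorem stable_map_sum_bound {G : Type*} [Group G]
    (P : Set G) (hP : IsPosCone P) (H : Subgroup G) (x : G)
    (hinv : InvOn P H x) (hcof : CofTo P H x)
    (ρ : G → ℤ) (hρ : RhoChar P H x ρ) (ρbar : G → ℝ)
    (hρbar : ∀ h ∈ H,
      Tendsto (fun N : ℕ => (ρ (h ^ N) : ℝ) / N) atTop (𝓝 (ρbar h)))
    (k : ℕ) (hk : 1 ≤ k) (h : Fin k → G) (hh : ∀ i, h i ∈ H)
    (hzero : ρbar (List.ofFn h).prod = 0) :
    |∑ i : Fin k, ρbar (h i)| ≤ (k : ℝ) - 1 := by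
  have hquasi := hρ.isQuasimorphismOn hP hinv (hρ.mem_posCone hP hcof)
  have hdefect : ∀ c ∈ H, ∀ d ∈ H, |ρbar (c * d) - ρbar c - ρbar d| ≤ 1 :=
    fun c hc d hd => hquasi.abs_homogenization_mul_sub_le hρbar hc hd
  have hmem : ∀ g ∈ List.ofFn h, g ∈ H := by
    simpa only [List.mem_ofFn, forall_exists_index, forall_apply_eq_imp_iff] using hh
  have hne : List.ofFn h ≠ [] := by
    rw [Ne, List.ofFn_eq_nil_iff]
    omega
  have := abs_apply_list_prod_sub_sum_le H.toSubmonoid ρbar hdefect hmem hne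
  rwa [hzero, List.map_ofFn, List.sum_ofFn, List.length_ofFn, zero_sub, abs_neg] at this
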